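/- Let c > 0 and define p : ℝ → GL(3,ℝ) by p(t) = [[1, (√(3c)/c)·sin(ct), -(3/(4c))·sin(2ct)], [0, 1, (√(3c)/c)·(1 - cos(ct))], [0, 0, 1]]. Then p(0) = I, p(t + 2π/c) = p(t) for all t, and p satisfies the left-invariant ODE p'(t) = p(t)·(√(3c)·cos(ct)·E₁₂ + √(3c)·sin(ct)·E₂₃ - (3/2)·E₁₃), where Eᵢⱼ denotes the 3×3 matrix with 1 in entry (i,j) and 0 elsewhere. -/

import Mathlib

open Real Matrix

/-- The explicit chain on the Heisenberg group with `M₃ = c ≠ 0`. -/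
noncomputable def heisenbergChain (c : ℝ) (t : ℝ) : Matrix (Fin 3) (Fin 3) ℝ :=
  !![1, Real.sqrt (3 * c) / c * Real.sin (c * t), -(3 / (4 * c)) * Real.sin (2 * c * t);
     0, 1, Real.sqrt (3 * c) / c * (1 - Real.cos (c * t));
     0, 0, 1]

/-- The right-hand side `p(t) · (√(3c)cos(ct)·E₁₂ + √(3c)sin(ct)·E₂₃ - (3/2)·E₁₃)`
of the chain ODE on `H₃`. -/
noncomputable def heisenbergChainRHS (c : ℝ) (t : ℝ) : Matrix (Fin 3) (Fin 3) ℝ :=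
  heisenbergChain c t *
    ((Real.sqrt (3 * c) * Real.cos (c * t)) • Matrix.single 0 1 (1 : ℝ) +
      (Real.sqrt (3 * c) * Real.sin (c * t)) • Matrix.single 1 2 (1 : ℝ) -
      (3 / 2 : ℝ) • Matrix.single 0 2 (1 : ℝ))

/-!
In coordinates `p = [[1, x, z], [0, 1, y], [0, 0, 1]]` the left-invariant equation
`p' = p (a E₁₂ + b E₂₃ - d E₁₃)` reads `x' = a`, `y' = b`, `z' = x y' - d`. With
`a, b = √(3c) (cos ct, sin ct)` the coordinates `x, y` are trigonometric, and
`z' = x y' - 3/2 = 3 sin² ct - 3/2 = -(3/2) cos 2ct` has mean zero: the drift `-3/2` cancels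
the mean of `x y'`, so `z` is periodic too and the chain closes up.
-/

def heisenbergMatrix (x y z : ℝ) : Matrix (Fin 3) (Fin 3) ℝ :=
  !![1, x, z; 0, 1, y; 0, 0, 1]

theorem heisenbergMatrix_zero : heisenbergMatrix 0 0 0 = 1 := by
  ext i j
  fin_cases i <;> fin_cases j <;> simp [heisenbergMatrix]

theorem heisenbergMatrix_mul_single (x y z a b d : ℝ) :
    heisenbergMatrix x y z * (a • single 0 1 1 + b • single 1 2 1 - d • single 0 2 1) =
      !![0, a, x * b - d; 0, 0, b; 0, 0, 0] := by
  ext i j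
  fin_cases i <;> fin_cases j <;>
    simp [heisenbergMatrix, Matrix.mul_apply, Fin.sum_univ_three, Matrix.single_apply,
      sub_eq_neg_add]

theorem hasDerivAt_heisenbergMatrix {x y z : ℝ → ℝ} {x' y' z' t : ℝ}
    (hx : HasDerivAt x x' t) (hy : HasDerivAt y y' t) (hz : HasDerivAt z z' t) (i j : Fin 3) :
    HasDerivAt (fun u => heisenbergMatrix (x u) (y u) (z u) i j)
      (!![0, x', z'; 0, 0, y'; 0, 0, 0] i j) t := by
  fin_cases i <;> fin_cases j <;> simp [heisenbergMatrix, hx, hy, hz, hasDerivAt_const]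

theorem hasDerivAt_sin_const_mul (c t : ℝ) :
    HasDerivAt (fun u => sin (c * u)) (c * cos (c * t)) t := by
  simpa [mul_comm] using (hasDerivAt_const_mul c).sin

theorem hasDerivAt_cos_const_mul (c t : ℝ) :
    HasDerivAt (fun u => cos (c * u)) (-(c * sin (c * t))) t := by
  simpa [mul_comm] using (hasDerivAt_const_mul c).cos

theorem heisenbergChain_eq (c t : ℝ) :
    heisenbergChain c t = heisenbergMatrix (√(3 * c) / c * sin (c * t))
      (√(3 * c) / c * (1 - cos (c * t))) (-(3 / (4 * c)) * sin (2 * c * t)) := rfl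

theorem heisenbergChain_periodic {c : ℝ} (hc : c ≠ 0) :
    Function.Periodic (heisenbergChain c) (2 * π / c) := by
  intro t
  have h : c * (t + 2 * π / c) = c * t + 2 * π := by field_simp
  have h2 : 2 * c * (t + 2 * π / c) = 2 * c * t + 2 * π + 2 * π := by field_simp; ring
  simp only [heisenbergChain_eq, h, h2, sin_add_two_pi, cos_add_two_pi]

theorem hasDerivAt_heisenbergChain {c : ℝ} (hc : 0 < c) (t : ℝ) (i j : Fin 3) :
    HasDerivAt (fun u => heisenbergChain c u i j) (heisenbergChainRHS c t i j) t := by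
  have hx : HasDerivAt (fun u => √(3 * c) / c * sin (c * u)) (√(3 * c) * cos (c * t)) t := by
    refine ((hasDerivAt_sin_const_mul c t).const_mul _).congr_deriv ?_
    field_simp
  have hy : HasDerivAt (fun u => √(3 * c) / c * (1 - cos (c * u)))
      (√(3 * c) * sin (c * t)) t := by
    refine (((hasDerivAt_cos_const_mul c t).const_sub 1).const_mul _).congr_deriv ?_
    field_simp
  have hz : HasDerivAt (fun u => -(3 / (4 * c)) * sin (2 * c * u))
      (√(3 * c) / c * sin (c * t) * (√(3 * c) * sin (c * t)) - 3 / 2) t := by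
    refine ((hasDerivAt_sin_const_mul (2 * c) t).const_mul _).congr_deriv ?_
    rw [mul_assoc 2 c t, cos_two_mul_eq_one_sub]
    field_simp
    rw [Real.sq_sqrt (by positivity)]
    ring
  rw [heisenbergChainRHS, heisenbergChain_eq, heisenbergMatrix_mul_single]
  exact hasDerivAt_heisenbergMatrix hx hy hz i j

theorem stmt_7 (c : ℝ) (hc : 0 < c) :
    heisenbergChain c 0 = 1 ∧
    (∀ t : ℝ, heisenbergChain c (t + 2 * π / c) = heisenbergChain c t) ∧
    (∀ t : ℝ, ∀ i j : Fin 3,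
      HasDerivAt (fun u => heisenbergChain c u i j) (heisenbergChainRHS c t i j) t) := by
  refine ⟨?_, heisenbergChain_periodic hc.ne', hasDerivAt_heisenbergChain hc⟩
  simpa [heisenbergChain_eq] using heisenbergMatrix_zero
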